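/- arXiv:math/0108078 — 3 statements merged into one kernel-verified Lean document; each statement's English description precedes it below -/
import Mathlib

section
/- Let M be an n×n skew-symmetric matrix over a field with first row (0, l₁, …, l_{n-1}). If at a point x all 4×4 sub-Pfaffians of M involving the first row and column vanish and some l_i(x) ≠ 0, then M(x) has rank 2, i.e. x lies on the Plücker-embedded Grassmannian Gr(n,2). -/
/-!
Fix `j` with `c := M 0 j ≠ 0` and write `u := M 0`, `v := M j`. The Pfaffian relation
`P_{0jkl} = 0` says `c • M = u vᵀ - v uᵀ`, so `M` has rank at most `2`. The relation with
indices `(j, 0, j)` says that the `2 × 2` minor of `M` on rows and columns `{0, j}` is `c²`,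
so the rank is at least `2`.
-/

namespace Matrix

theorem rank_vecMulVec_sub_vecMulVec_le_two {m n R : Type*} [Fintype n] [CommRing R]
    [StrongRankCondition R] (u v : m → R) (u' v' : n → R) :
    (vecMulVec u u' - vecMulVec v v').rank ≤ 2 := by
  have hfactor : vecMulVec u u' - vecMulVec v v' = (of fun i => ![u i, v i]) * of ![u', -v'] := by
    ext i k
    simp [vecMulVec_apply, mul_apply, Fin.sum_univ_two, sub_eq_add_neg]
  rw [hfactor]
  exact (rank_mul_le_left _ _).trans ((rank_le_card_width _).trans_eq (Fintype.card_fin 2))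

theorem card_le_rank_of_det_submatrix_ne_zero {m n k R : Type*} [Fintype n] [Fintype k]
    [DecidableEq k] [CommRing R] [IsDomain R] (M : Matrix m n R) (r : k → m) (c : k → n)
    (h : (M.submatrix r c).det ≠ 0) : Fintype.card k ≤ M.rank :=
  (rank_of_det_ne_zero h).symm.le.trans (rank_submatrix_le M r c)

section Pfaffian

variable {m R : Type*} {M : Matrix m m R} {i₀ : m}

theorem smul_eq_vecMulVec_sub_vecMulVec_of_pfaffian [CommRing R]
    (hpf : ∀ j k l, M i₀ j * M k l - M i₀ k * M j l + M i₀ l * M j k = 0) (j : m) :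
    M i₀ j • M = vecMulVec (M i₀) (M j) - vecMulVec (M j) (M i₀) := by
  ext k l
  simp only [smul_apply, smul_eq_mul, sub_apply, vecMulVec_apply]
  linear_combination hpf j k l

theorem det_submatrix_pair_of_pfaffian [CommRing R]
    (hpf : ∀ j k l, M i₀ j * M k l - M i₀ k * M j l + M i₀ l * M j k = 0) (j : m) :
    (M.submatrix ![i₀, j] ![i₀, j]).det = M i₀ j ^ 2 := by
  rw [det_fin_two]
  simp only [submatrix_apply, Matrix.cons_val_zero, Matrix.cons_val_one]
  linear_combination -hpf j i₀ j

theorem rank_eq_two_of_pfaffian [Fintype m] [Field R]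
    (hpf : ∀ j k l, M i₀ j * M k l - M i₀ k * M j l + M i₀ l * M j k = 0) {j : m}
    (hj : M i₀ j ≠ 0) : M.rank = 2 := by
  apply le_antisymm
  · calc M.rank = (M i₀ j • M).rank :=
          (rank_smul_of_mem_nonZeroDivisors M (mem_nonZeroDivisors_of_ne_zero hj)).symm
      _ ≤ 2 := by
          rw [smul_eq_vecMulVec_sub_vecMulVec_of_pfaffian hpf]
          exact rank_vecMulVec_sub_vecMulVec_le_two _ _ _ _
  · have hminor : (M.submatrix ![i₀, j] ![i₀, j]).det ≠ 0 := by
      rw [det_submatrix_pair_of_pfaffian hpf]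
      exact pow_ne_zero 2 hj
    simpa using card_le_rank_of_det_submatrix_ne_zero M _ _ hminor

end Pfaffian

end Matrix

theorem rank_two_of_pfaffians_first_row_general (K : Type*) [Field K] (n : ℕ)
    (M : Matrix (Fin (n + 1)) (Fin (n + 1)) K)
    (hpf : ∀ j k l : Fin (n + 1),
      M 0 j * M k l - M 0 k * M j l + M 0 l * M j k = 0)
    (hx : ∃ i, M 0 i ≠ 0) :
    M.rank = 2 := by
  obtain ⟨i, hi⟩ := hx
  exact Matrix.rank_eq_two_of_pfaffian hpf hi

/-- **Vanishing of the Pfaffians through the first row forces rank 2 away from the vertex.**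
Let `M` be a skew-symmetric `(n+1)×(n+1)` matrix over a field (first row
`(0, l₁, …, l_n)`).  If all `4×4` sub-Pfaffians `P_{0jkl} = M₀ⱼM_{kl} − M₀ₖM_{jl} + M₀ₗM_{jk}`
involving the first row and column vanish and some entry `M₀ᵢ` of the first row is nonzero,
then `M` has rank `2`, i.e. the corresponding point lies on the Plücker-embedded
Grassmannian `Gr(n+1, 2)` (the rank-`≤2` locus of skew matrices). -/
theorem rank_two_of_pfaffians_first_row (K : Type*) [Field K] (n : ℕ)
    (M : Matrix (Fin (n + 1)) (Fin (n + 1)) K)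
    (hskew : M.transpose = -M) (hdiag : ∀ i, M i i = 0)
    (hpf : ∀ j k l : Fin (n + 1),
      M 0 j * M k l - M 0 k * M j l + M 0 l * M j k = 0)
    (hx : ∃ i, M 0 i ≠ 0) :
    M.rank = 2 :=
  rank_two_of_pfaffians_first_row_general K n M hpf hx
end

section
/- Let L be a vector space of dimension p+3. Then the zero locus in P(L ⊕ Λ²L) of the quadrics in the image of Λ³L → L ⊗ Λ²L (i.e. Gensyz_p(L)) equals the union of the Plücker-embedded Grassmannian Gr(p+4, 2) and the linear subspace P(Λ²L) = V(L) of codimension p+3. -/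
/-!
The quadric `M 0 j * M k l - M 0 k * M j l + M 0 l * M j k` is the Pfaffian of the principal
`4 × 4` submatrix on the indices `0, j, k, l`, whose determinant is its square; so it vanishes
on alternating matrices of rank `≤ 2`. Conversely, if `M 0 j ≠ 0`, the vanishing of the
quadrics with first indices `0, j` expresses every row of `M` as a combination of the rows
`M 0` and `M j`.
-/

open Matrix

theorem Matrix.det_fin_four_alternating {R : Type*} [CommRing R] (a b c d e f : R) :
    !![0, a, b, c; -a, 0, d, e; -b, -d, 0, f; -c, -e, -f, 0].det = (a * f - b * e + c * d) ^ 2 := by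
  simp [det_succ_row_zero, Fin.sum_univ_succ, Fin.succAbove]
  ring

section

variable {K n : Type*} [Field K] [Fintype n]

theorem pfaffian_quadric_eq_zero_of_rank_le_two [DecidableEq n] {A : Matrix n n K}
    (hskew : Aᵀ = -A) (hdiag : ∀ i, A i i = 0) (hA : A.rank ≤ 2) (i j k l : n) :
    A i j * A k l - A i k * A j l + A i l * A j k = 0 := by
  have hanti : ∀ a b, A b a = -A a b := fun a b => by
    simpa using congrFun (congrFun hskew a) b
  have hN : A.submatrix ![i, j, k, l] ![i, j, k, l] = !![0, A i j, A i k, A i l;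
      -A i j, 0, A j k, A j l; -A i k, -A j k, 0, A k l; -A i l, -A j l, -A k l, 0] := by
    ext a b
    fin_cases a <;> fin_cases b <;> simp [hdiag] <;> first | rfl | exact hanti _ _
  have hdet : (A.submatrix ![i, j, k, l] ![i, j, k, l]).det = 0 := by
    by_contra hne
    have := (rank_of_det_ne_zero hne).symm.trans_le ((A.rank_submatrix_le _ _).trans hA)
    simp at this
  rw [hN, det_fin_four_alternating] at hdet
  exact pow_eq_zero_iff two_ne_zero |>.mp hdet

theorem rank_le_two_of_pfaffian_quadrics_eq_zero {A : Matrix n n K} {i j : n} (hij : A i j ≠ 0)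
    (hq : ∀ k l, A i j * A k l - A i k * A j l + A i l * A j k = 0) : A.rank ≤ 2 := by
  have hfactor : A = (of fun k => ![(A i j)⁻¹ * A i k, -((A i j)⁻¹ * A j k)]) * of ![A j, A i] := by
    ext k l
    simp only [mul_apply, of_apply, Fin.sum_univ_two, cons_val_zero, cons_val_one]
    field_simp
    linear_combination hq k l
  rw [hfactor]
  exact (rank_mul_le_left _ _).trans (rank_le_card_width _ |>.trans_eq (Fintype.card_fin 2))

end

/-- **`Gensyz_p(L) = Gr(p+4,2) ∪ P^{N−p−3}` for `dim L = p+3`.**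
Identify points of (the affine cone over) `P(L ⊕ Λ²L) ≅ P(Λ²U)`, `U = k ⊕ L` of dimension
`p+4`, with skew-symmetric `(p+4)×(p+4)` matrices `M`; the summand `L` corresponds to the
first row `(0, l₁, …, l_{p+3})`.  The quadrics in the image of `Λ³L → L ⊗ Λ²L` are the
`4×4` Pfaffians of `M` involving the first row and column, and their common zero locus is
the union of the Plücker-embedded Grassmannian `Gr(p+4, 2)` (the rank-`≤2` locus) and the
linear subspace `V(L) = P(Λ²L)` of codimension `p+3` (where the first row vanishes). -/
theorem gensyz_rank_p_add_three (K : Type*) [Field K] (p : ℕ)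
    (M : Matrix (Fin (p + 4)) (Fin (p + 4)) K)
    (hskew : M.transpose = -M) (hdiag : ∀ i, M i i = 0) :
    (∀ j k l : Fin (p + 4),
        M 0 j * M k l - M 0 k * M j l + M 0 l * M j k = 0) ↔
      (M.rank ≤ 2 ∨ ∀ j : Fin (p + 4), M 0 j = 0) := by
  constructor
  · intro hq
    by_cases hrow : ∀ j, M 0 j = 0
    · exact .inr hrow
    · obtain ⟨j, hj⟩ := not_forall.mp hrow
      exact .inl (rank_le_two_of_pfaffian_quadrics_eq_zero hj (hq j))
  · rintro (hrank | hrow) j k l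
    · exact pfaffian_quadric_eq_zero_of_rank_le_two hskew hdiag hrank 0 j k l
    · simp [hrow]
end

section
/- Let X ⊆ P(V) be a nondegenerate closed subscheme over a field whose homogeneous ideal I_X is generated by quadrics, and suppose X admits a p-th linear syzygy s of rank p+1 (the minimal possible rank). Then X is reducible. -/
noncomputable section

open MvPolynomial

/-- The linear form on `P^{n-1}` with coefficient vector `c`. -/
def linF {K : Type*} [Field K] {n : ℕ} (c : Fin n → K) : MvPolynomial (Fin n) K :=
  ∑ i, C (c i) * X i

/-- The `j`-th coordinate covector on `V = Kⁿ`. -/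
def coord {K : Type*} [Field K] {n : ℕ} (j : Fin n) :
    Module.Dual K (Fin n → K) :=
  LinearMap.proj j

/-- A `p`-th linear syzygy of `X ⊆ P(V)` is an element of
`ker (Λᵖ V ⊗ (I_X)₂ → Λ^{p-1} V ⊗ (I_X)₃)` (Koszul cohomology).  We encode an element of
`Λᵖ V ⊗ R` (`V = Kⁿ`, `R` the polynomial ring) as an alternating map `S : (V*)ᵖ → R`, and
the Koszul cocycle condition as: for all `(p-1)`-tuples `ψ` of covectors,
`∑ⱼ Xⱼ · S(coord j, ψ) = 0`. -/
def IsKoszulCocycle {K : Type*} [Field K] {n p : ℕ}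
    (S : (Module.Dual K (Fin n → K)) [⋀^Fin p]→ₗ[K] MvPolynomial (Fin n) K) : Prop :=
  ∀ (h : p = (p - 1) + 1) (ψ : Fin (p - 1) → Module.Dual K (Fin n → K)),
    ∑ j : Fin n, X j * S ((Fin.cons (coord j) ψ) ∘ Fin.cast h) = 0

/-- `S` (an element of `Λᵖ V ⊗ R`) lies in `Λᵖ L ⊗ R` for a subspace `L ⊆ V`: in the dual
encoding this means `S` vanishes on every tuple one of whose entries annihilates `L`.
The *rank* of a syzygy is the least dimension of such an `L`, and `L_s` is the
corresponding space of linear forms involved in `S`. -/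
def SupportedOn {K : Type*} [Field K] {n p : ℕ}
    (S : (Module.Dual K (Fin n → K)) [⋀^Fin p]→ₗ[K] MvPolynomial (Fin n) K)
    (L : Submodule K (Fin n → K)) : Prop :=
  ∀ φ : Module.Dual K (Fin n → K), (∀ v ∈ L, φ v = 0) →
    ∀ ψ : Fin p → Module.Dual K (Fin n → K), (∃ i, ψ i = φ) → S ψ = 0

/-- The syzygy `S` has rank `r`: `r` is the least dimension of a subspace of linear forms
supporting `S`. -/
def HasRank {K : Type*} [Field K] {n p : ℕ}
    (S : (Module.Dual K (Fin n → K)) [⋀^Fin p]→ₗ[K] MvPolynomial (Fin n) K)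
    (r : ℕ) : Prop :=
  IsLeast {m | ∃ L : Submodule K (Fin n → K),
    SupportedOn S L ∧ Module.finrank K L = m} r

/-!
Let `L` be a `(p+1)`-dimensional space supporting `S`, with basis `b₀, …, b_p` and dual covectors
`φ₀, …, φ_p`. Since `S ≠ 0`, some `p` of the `φ`'s, all but `φ_i` say, give a nonzero quadric
`A = S(φ_{a₀}, …, φ_{a_{p-1}}) ∈ I`. Contracting the Koszul cocycle condition with
`φ_{a₁}, …, φ_{a_{p-1}}` leaves only two terms: `ℓ(b_{a₀}) · A + ℓ(b_i) · B = 0`, where `ℓ(c)` is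
the linear form with coefficients `c`. As `ℓ(b_i)` is prime and does not divide `ℓ(b_{a₀})`, it
divides `A`, so `A = ℓ(b_i) · ℓ(e)` is a product of linear forms. If the radical of `I` were prime
it would contain one of them, against nondegeneracy or `A ≠ 0`.
-/

section HomogeneousComponent

attribute [local instance] MvPolynomial.gradedAlgebra

lemma homogeneousComponent_add_mul_of_isHomogeneous_left {σ R : Type*} [CommSemiring R]
    {l : MvPolynomial σ R} {i : ℕ} (hl : l.IsHomogeneous i) (j : ℕ) (m : MvPolynomial σ R) :
    homogeneousComponent (i + j) (l * m) = l * homogeneousComponent j m := by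
  have := DirectSum.coe_decompose_mul_of_left_mem_of_le (homogeneousSubmodule σ R) (b := m)
    ((mem_homogeneousSubmodule i l).mpr hl) (Nat.le_add_right i j)
  rw [Nat.add_sub_cancel_left] at this
  rwa [← decomposition.decompose'_apply, ← decomposition.decompose'_apply]

end HomogeneousComponent

lemma Module.Basis.apply_eq_sum_smul_of_comp_subtype_eq_coord {K V ι : Type*} [Field K]
    [AddCommGroup V] [Module K V] [Fintype ι] {L : Submodule K V} (b : Module.Basis ι K L)
    {φ : ι → Module.Dual K V} (hφ : ∀ k, (φ k).comp L.subtype = b.coord k)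
    (χ : Module.Dual K V) (x : L) : χ x = (∑ k, χ (b k) • φ k) x := by
  classical
  have hφb : ∀ k l, φ k (b l) = b.coord k (b l) := fun k l => LinearMap.congr_fun (hφ k) (b l)
  have h : χ.comp L.subtype = (∑ k, χ (b k) • φ k).comp L.subtype := b.ext fun l => by
    simp [hφb, Finsupp.single_apply]
  exact LinearMap.congr_fun h x

lemma Module.Basis.coe_ne_smul_coe {K V ι : Type*} [Field K] [AddCommGroup V] [Module K V]
    {L : Submodule K V} (b : Module.Basis ι K L) {k l : ι} (hkl : k ≠ l) (u : K) :
    (b k : V) ≠ u • (b l : V) := fun h => by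
  simpa [Finsupp.single_apply, hkl.symm] using
    congrArg (b.repr · k) (Subtype.ext (h.trans (L.coe_smul u (b l)).symm))

lemma Fin.exists_compl_range_eq_singleton {m : ℕ} {a : Fin m → Fin (m + 1)}
    (ha : Function.Injective a) : ∃ i, (Set.range a)ᶜ = {i} := by
  classical
  obtain ⟨i, hi⟩ : ∃ i, (Finset.univ.image a)ᶜ = {i} := by
    rw [← Finset.card_eq_one, Finset.card_compl, Finset.card_image_of_injective _ ha]
    simp
  exact ⟨i, by simpa [Set.ext_iff, Finset.ext_iff] using hi⟩

section LinearForms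

variable {K : Type*} [Field K] {n : ℕ}

lemma coeff_single_one_linF (c : Fin n → K) (i : Fin n) :
    coeff (Finsupp.single i 1) (linF c) = c i := by
  classical
  simp [linF, coeff_sum, coeff_C_mul, coeff_X, Finsupp.single_left_inj one_ne_zero]

lemma linF_injective : Function.Injective (linF : (Fin n → K) → MvPolynomial (Fin n) K) :=
  fun c d h => funext fun i => by rw [← coeff_single_one_linF c, h, coeff_single_one_linF]

lemma linF_zero : linF (0 : Fin n → K) = 0 := by simp [linF]

lemma linF_smul (k : K) (c : Fin n → K) : linF (k • c) = C k * linF c := by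
  simp [linF, Finset.mul_sum, mul_assoc]

lemma isHomogeneous_linF (c : Fin n → K) : (linF c).IsHomogeneous 1 :=
  IsHomogeneous.sum _ _ _ fun i _ => isHomogeneous_C_mul_X (c i) i

lemma exists_eq_linF_of_isHomogeneous_one {q : MvPolynomial (Fin n) K} (h : q.IsHomogeneous 1) :
    ∃ c : Fin n → K, q = linF c := by
  rw [← mem_homogeneousSubmodule, homogeneousSubmodule_one_eq_span_X,
    Submodule.mem_span_range_iff_exists_fun] at h
  obtain ⟨c, rfl⟩ := h
  exact ⟨c, by simp [linF, smul_eq_C_mul]⟩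

lemma linF_ne_zero {c : Fin n → K} (hc : c ≠ 0) : linF c ≠ 0 :=
  fun h => hc (linF_injective (h.trans linF_zero.symm))

lemma totalDegree_linF {c : Fin n → K} (hc : c ≠ 0) : (linF c).totalDegree = 1 :=
  (isHomogeneous_linF c).totalDegree (linF_ne_zero hc)

lemma prime_linF {c : Fin n → K} (hc : c ≠ 0) : Prime (linF c) := by
  obtain ⟨i, hi⟩ := Function.ne_iff.mp hc
  refine (irreducible_of_totalDegree_eq_one (totalDegree_linF hc) fun x hx => ?_).prime
  have := hx (Finsupp.single i 1)
  rw [coeff_single_one_linF] at this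
  exact isUnit_iff_ne_zero.mpr (ne_zero_of_dvd_ne_zero hi this)

lemma linF_not_dvd_linF {c d : Fin n → K} (hd : ∀ u : K, d ≠ u • c) : ¬ linF c ∣ linF d := by
  rintro ⟨g, hg⟩
  have hd0 : d ≠ 0 := by simpa using hd 0
  have hc0 : c ≠ 0 := by rintro rfl; exact linF_ne_zero hd0 (by rw [hg, linF_zero, zero_mul])
  have hg0 : g ≠ 0 := by rintro rfl; exact linF_ne_zero hd0 (by rw [hg, mul_zero])
  have hdeg := congrArg totalDegree hg
  rw [totalDegree_mul_of_isDomain (linF_ne_zero hc0) hg0, totalDegree_linF hc0,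
    totalDegree_linF hd0] at hdeg
  have hgC : g = C (coeff 0 g) := totalDegree_eq_zero_iff_eq_C.mp (by omega)
  exact hd (coeff 0 g) (linF_injective (by rw [hg, linF_smul, mul_comm, ← hgC]))

lemma exists_eq_linF_mul_linF_of_linF_mul_add_linF_mul_eq_zero {c d : Fin n → K}
    {A B : MvPolynomial (Fin n) K} (hc : c ≠ 0) (hd : ∀ u : K, d ≠ u • c)
    (hA : A.IsHomogeneous 2) (hrel : linF d * A + linF c * B = 0) :
    ∃ e : Fin n → K, A = linF c * linF e := by
  have hdvd : linF c ∣ linF d * A := ⟨-B, by linear_combination hrel⟩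
  obtain ⟨m, rfl⟩ := ((prime_linF hc).dvd_or_dvd hdvd).resolve_left (linF_not_dvd_linF hd)
  obtain ⟨e, he⟩ := exists_eq_linF_of_isHomogeneous_one (homogeneousComponent_isHomogeneous 1 m)
  refine ⟨e, ?_⟩
  rw [← homogeneousComponent_eq_self hA, ← he]
  exact homogeneousComponent_add_mul_of_isHomogeneous_left (isHomogeneous_linF c) 1 m

end LinearForms

section Syzygy

variable {K : Type*} [Field K] {n p : ℕ}
  {S : (Module.Dual K (Fin n → K)) [⋀^Fin p]→ₗ[K] MvPolynomial (Fin n) K}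
  {L : Submodule K (Fin n → K)}

lemma SupportedOn.map_congr (hS : SupportedOn S L) {ψ ψ' : Fin p → Module.Dual K (Fin n → K)}
    (h : ∀ t, ∀ x ∈ L, ψ t x = ψ' t x) : S ψ = S ψ' := by
  classical
  rw [← sub_eq_zero, ← Finset.piecewise_univ ψ' ψ]
  refine (S.toMultilinearMap.map_sub_map_piecewise ψ ψ' Finset.univ).trans ?_
  exact Finset.sum_eq_zero fun t _ =>
    hS (ψ t - ψ' t) (fun x hx => by simp [h t x hx]) _ ⟨t, by simp⟩

lemma SupportedOn.exists_injective_ne_zero {ι : Type*} [Fintype ι] (hS : SupportedOn S L)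
    (b : Module.Basis ι K L) {φ : ι → Module.Dual K (Fin n → K)}
    (hφ : ∀ k, (φ k).comp L.subtype = b.coord k) (h0 : S ≠ 0) :
    ∃ a : Fin p → ι, Function.Injective a ∧ S (φ ∘ a) ≠ 0 := by
  by_contra! h
  refine h0 (AlternatingMap.ext fun ψ => ?_)
  calc S ψ = S (fun t => ∑ k, ψ t (b k) • φ k) :=
        hS.map_congr fun t x hx => b.apply_eq_sum_smul_of_comp_subtype_eq_coord hφ (ψ t) ⟨x, hx⟩
    _ = ∑ r : Fin p → ι, (∏ t, ψ t (b (r t))) • S (φ ∘ r) := by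
        refine (S.toMultilinearMap.map_sum fun t k => ψ t (b k) • φ k).trans ?_
        exact Finset.sum_congr rfl fun r _ => S.toMultilinearMap.map_smul_univ _ (φ ∘ r)
    _ = 0 := Finset.sum_eq_zero fun r _ => by
        by_cases hr : Function.Injective r
        · rw [h r hr, smul_zero]
        · rw [S.map_eq_zero_of_not_injective _ fun hφr => hr hφr.of_comp, smul_zero]

end Syzygy

section Koszul

variable {K : Type*} [Field K] {n q : ℕ}
  {S : (Module.Dual K (Fin n → K)) [⋀^Fin (q + 1)]→ₗ[K] MvPolynomial (Fin n) K}
  {L : Submodule K (Fin n → K)}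

lemma IsKoszulCocycle.sum_X_mul_cons (hkos : IsKoszulCocycle S)
    (ψ : Fin q → Module.Dual K (Fin n → K)) : ∑ j, X j * S (Fin.cons (coord j) ψ) = 0 :=
  hkos rfl ψ

lemma SupportedOn.map_cons_eq_sum {ι : Type*} [Fintype ι] (hS : SupportedOn S L)
    (b : Module.Basis ι K L) {φ : ι → Module.Dual K (Fin n → K)}
    (hφ : ∀ k, (φ k).comp L.subtype = b.coord k) (χ : Module.Dual K (Fin n → K))
    (ψ : Fin q → Module.Dual K (Fin n → K)) :
    S (Fin.cons χ ψ) = ∑ k, χ (b k) • S (Fin.cons (φ k) ψ) := by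
  classical
  calc S (Fin.cons χ ψ) = S (Function.update (Fin.cons χ ψ) 0 (∑ k, χ (b k) • φ k)) :=
        hS.map_congr (Fin.cases (fun x hx => by
            simpa using b.apply_eq_sum_smul_of_comp_subtype_eq_coord hφ χ ⟨x, hx⟩)
          fun t _ _ => by simp)
    _ = ∑ k, χ (b k) • S (Function.update (Fin.cons χ ψ) 0 (φ k)) := by
        rw [S.map_update_sum]
        simp only [S.map_update_smul]
    _ = _ := by simp only [Fin.update_cons_zero]

lemma IsKoszulCocycle.sum_linF_mul {ι : Type*} [Fintype ι] (hkos : IsKoszulCocycle S)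
    (hS : SupportedOn S L) (b : Module.Basis ι K L) {φ : ι → Module.Dual K (Fin n → K)}
    (hφ : ∀ k, (φ k).comp L.subtype = b.coord k) (ψ : Fin q → Module.Dual K (Fin n → K)) :
    ∑ k, linF (b k : Fin n → K) * S (Fin.cons (φ k) ψ) = 0 := by
  calc ∑ k, linF (b k : Fin n → K) * S (Fin.cons (φ k) ψ)
      = ∑ j, X j * ∑ k, coord j (b k : Fin n → K) • S (Fin.cons (φ k) ψ) := by
        simp only [linF, Finset.sum_mul, Finset.mul_sum]
        rw [Finset.sum_comm]
        refine Finset.sum_congr rfl fun j _ => Finset.sum_congr rfl fun k _ => ?_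
        rw [coord, LinearMap.proj_apply, smul_eq_C_mul]
        ring
    _ = ∑ j, X j * S (Fin.cons (coord j) ψ) :=
        Finset.sum_congr rfl fun j _ => by rw [hS.map_cons_eq_sum b hφ]
    _ = 0 := hkos.sum_X_mul_cons ψ

lemma IsKoszulCocycle.linF_mul_add_linF_mul_eq_zero (hkos : IsKoszulCocycle S)
    (hS : SupportedOn S L) (b : Module.Basis (Fin (q + 2)) K L)
    {φ : Fin (q + 2) → Module.Dual K (Fin n → K)} (hφ : ∀ k, (φ k).comp L.subtype = b.coord k)
    {a : Fin (q + 1) → Fin (q + 2)} {i : Fin (q + 2)} (hai : (Set.range a)ᶜ = {i}) :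
    linF (b (a 0) : Fin n → K) * S (φ ∘ a)
      + linF (b i : Fin n → K) * S (Fin.cons (φ i) (φ ∘ a ∘ Fin.succ)) = 0 := by
  have hi : i ∈ (Set.range a)ᶜ := by rw [hai]; rfl
  have h := hkos.sum_linF_mul hS b hφ (φ ∘ a ∘ Fin.succ)
  rwa [Fintype.sum_eq_add (a 0) i (fun h => hi ⟨0, h⟩) ?_,
    show Fin.cons (φ (a 0)) (φ ∘ a ∘ Fin.succ) = φ ∘ a from Fin.cons_self_tail (φ ∘ a)] at h
  -- every other `k` is some `a t` with `t ≠ 0`, which then occurs twice in the argument of `S`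
  rintro k ⟨hk0, hki⟩
  obtain ⟨t, rfl⟩ : k ∈ Set.range a := by
    by_contra hk
    exact hki (by rw [← Set.mem_singleton_iff, ← hai]; exact hk)
  obtain ⟨s, rfl⟩ := Fin.exists_succ_eq.mpr fun ht => hk0 (congrArg a ht)
  rw [S.map_eq_zero_of_eq _ (i := 0) (j := s.succ) (by simp) (Fin.succ_ne_zero s).symm, mul_zero]

end Koszul

lemma HasRank.eq_zero {K : Type*} [Field K] {n r : ℕ}
    {S : (Module.Dual K (Fin n → K)) [⋀^Fin 0]→ₗ[K] MvPolynomial (Fin n) K} (h : HasRank S r) :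
    r = 0 :=
  Nat.le_zero.mp (h.2 ⟨⊥, fun _ _ _ ⟨t, _⟩ => t.elim0, finrank_bot K _⟩)

theorem reducible_of_rank_p_add_one_syzygy_general {K : Type*} [Field K] {n p : ℕ}
    (I : Ideal (MvPolynomial (Fin n) K))
    (hnondeg : ∀ c : Fin n → K, linF c ∈ I.radical → c = 0)
    (S : (Module.Dual K (Fin n → K)) [⋀^Fin p]→ₗ[K] MvPolynomial (Fin n) K)
    (hval : ∀ ψ, S ψ ∈ I ∧ (S ψ).IsHomogeneous 2)
    (hkos : IsKoszulCocycle S) (hS : S ≠ 0) (hrank : HasRank S (p + 1)) :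
    ¬ (I.radical).IsPrime := by
  intro hprime
  obtain ⟨q, rfl⟩ : ∃ q, p = q + 1 :=
    Nat.exists_eq_succ_of_ne_zero (by rintro rfl; exact one_ne_zero hrank.eq_zero)
  obtain ⟨⟨L, hSL, hdim⟩, -⟩ := hrank
  let b := Module.finBasisOfFinrankEq K L hdim
  choose φ hφ using fun k => LinearMap.exists_extend (b.coord k)
  obtain ⟨a, ha, hA⟩ := hSL.exists_injective_ne_zero b hφ hS
  obtain ⟨i, hai⟩ := Fin.exists_compl_range_eq_singleton ha
  have hne : a 0 ≠ i := fun h => (hai ▸ Set.mem_singleton i : i ∈ (Set.range a)ᶜ) ⟨0, h⟩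
  obtain ⟨e, he⟩ := exists_eq_linF_mul_linF_of_linF_mul_add_linF_mul_eq_zero
    (by simpa using b.ne_zero i) (b.coe_ne_smul_coe hne) (hval _).2
    (hkos.linF_mul_add_linF_mul_eq_zero hSL b hφ hai)
  have hmem : linF (b i : Fin n → K) * linF e ∈ I.radical := he ▸ I.le_radical (hval _).1
  rcases hprime.mem_or_mem hmem with h | h
  · exact b.ne_zero i (by simpa using hnondeg _ h)
  · exact hA (by rw [he, hnondeg e h, linF_zero, mul_zero])

/-- **A `p`-th linear syzygy of the minimal possible rank `p+1` forces reducibility.**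
Let `X ⊆ P(V)` be a nondegenerate closed subscheme whose homogeneous ideal `I` is
generated by quadrics, admitting a nonzero `p`-th linear syzygy `S` of rank `p+1`.
Then `X` is reducible (its radical ideal is not prime). -/
theorem reducible_of_rank_p_add_one_syzygy {K : Type*} [Field K] {n p : ℕ}
    (I : Ideal (MvPolynomial (Fin n) K))
    (hquad : I = Ideal.span {q | q ∈ I ∧ q.IsHomogeneous 2})
    (hnondeg : ∀ c : Fin n → K, linF c ∈ I.radical → c = 0)
    (S : (Module.Dual K (Fin n → K)) [⋀^Fin p]→ₗ[K] MvPolynomial (Fin n) K)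
    (hval : ∀ ψ, S ψ ∈ I ∧ (S ψ).IsHomogeneous 2)
    (hkos : IsKoszulCocycle S) (hS : S ≠ 0) (hrank : HasRank S (p + 1)) :
    ¬ (I.radical).IsPrime :=
  reducible_of_rank_p_add_one_syzygy_general I hnondeg S hval hkos hS hrank
end
end
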